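/- For an l-Grigorchuk subshift, Q(2) = 2^{l_1 + 1} − 1, where Q(v) denotes the maximal p with v^p in the language; more precisely, the maximal p with (a,x)^p ∈ L(η) equals 2^{l_1+1} − 1. -/

import Mathlib

open Filter ENNReal

/-- The left shift on infinite words. -/
def shft {A : Type*} (y : ℕ → A) : ℕ → A := fun n => y (n + 1)

/-- `w` occurs as a factor of the infinite word `y`. -/
def FactorOf {A : Type*} (w : List A) (y : ℕ → A) : Prop :=
  ∃ k, w = (List.range w.length).map fun i => y (k + i)

/-- The language of a subshift `Y`: all finite factors of elements of `Y`. -/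
def LangOf {A : Type*} (Y : Set (ℕ → A)) : Set (List A) :=
  {w | ∃ y ∈ Y, FactorOf w y}

/-- The language of an infinite word `x`: all finite factors of `x`
(equals the language of the subshift `Ω(x)` generated by `x`). -/
def LangX {A : Type*} (x : ℕ → A) : Set (List A) :=
  {w | FactorOf w x}

/-- A subshift: a closed, shift-invariant set of infinite words. -/
def IsSubshift {A : Type*} [TopologicalSpace A] (Y : Set (ℕ → A)) : Prop :=
  IsClosed Y ∧ shft '' Y = Y

/-- The subshift generated by an infinite word `x`: the closure of its shift orbit. -/
def OmegaOf {A : Type*} [TopologicalSpace A] (x : ℕ → A) : Set (ℕ → A) :=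
  closure {y | ∃ k, y = shft^[k] x}

/-- `Y` is aperiodic: it contains no periodic point. -/
def Aperiodic {A : Type*} (Y : Set (ℕ → A)) : Prop :=
  ¬ ∃ y ∈ Y, ∃ k, 0 < k ∧ shft^[k] y = y

/-- `Q(n)`: the supremum of the powers `p` such that some word `W` of length `n`
in the language `L` has `W^p ∈ L`. -/
noncomputable def QfunL {A : Type*} (L : Set (List A)) (n : ℕ) : ℕ∞ :=
  sSup ((fun q : ℕ => (q : ℕ∞)) ''
    {q | ∃ W ∈ L, W.length = n ∧ (List.replicate q W).flatten ∈ L})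

/-- The repetitive function `R(n)`: the smallest `r'` such that every word of
length `r'` in `L` contains all words of `L` of length `n` as factors
(`⊤` if no such `r'` exists). -/
noncomputable def RfunL {A : Type*} (L : Set (List A)) (n : ℕ) : ℕ∞ :=
  sInf ((fun r : ℕ => (r : ℕ∞)) ''
    {r' | ∀ u ∈ L, u.length = r' → ∀ v ∈ L, v.length = n → v <:+: u})

/-- `Q_α = limsup Q(n)/n^(α-1)`. -/
noncomputable def Qalpha {A : Type*} (L : Set (List A)) (α : ℝ) : ℝ≥0∞ :=
  Filter.atTop.limsup fun n : ℕ => (QfunL L n : ℝ≥0∞) / (n : ℝ≥0∞) ^ (α - 1)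

/-- `R_α = limsup R(n)/n^α`. -/
noncomputable def Ralpha {A : Type*} (L : Set (List A)) (α : ℝ) : ℝ≥0∞ :=
  Filter.atTop.limsup fun n : ℕ => (RfunL L n : ℝ≥0∞) / (n : ℝ≥0∞) ^ α

/-- `A_{α,n}`: the infimum of `(|W|-|w|)/|w|^(1/α)` over `w, W` in the language with
`w` a proper nonempty prefix and suffix of `W` and `|W| = n`. -/
noncomputable def AfunL {A : Type*} (L : Set (List A)) (α : ℝ) (n : ℕ) : ℝ≥0∞ :=
  sInf {t | ∃ w W : List A, w ∈ L ∧ W ∈ L ∧ w ≠ [] ∧ w ≠ W ∧ w <+: W ∧ w <:+ W ∧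
    W.length = n ∧ t = ((W.length - w.length : ℕ) : ℝ≥0∞) / (w.length : ℝ≥0∞) ^ (1 / α)}

/-- `ℓ_α = liminf_n A_{α,n}`. -/
noncomputable def lalpha {A : Type*} (L : Set (List A)) (α : ℝ) : ℝ≥0∞ :=
  Filter.atTop.liminf (AfunL L α)

/-- `ℓ`: the repulsiveness constant (no restriction on `|W|`). -/
noncomputable def lconst {A : Type*} (L : Set (List A)) : ℝ≥0∞ :=
  sInf {t | ∃ w W : List A, w ∈ L ∧ W ∈ L ∧ w ≠ [] ∧ w ≠ W ∧ w <+: W ∧ w <:+ W ∧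
    t = ((W.length - w.length : ℕ) : ℝ≥0∞) / (w.length : ℝ≥0∞)}

/-- The four-letter alphabet `{a, x, y, z}` of the Grigorchuk subshift. -/
inductive GW : Type
  | a : GW
  | x : GW
  | y : GW
  | z : GW
  deriving DecidableEq

instance instFintypeGW : Fintype GW :=
  ⟨{GW.a, GW.x, GW.y, GW.z}, fun c => by cases c <;> simp⟩

instance : TopologicalSpace GW := ⊥
instance : DiscreteTopology GW := ⟨rfl⟩
/-- The substitution `τ_b` on letters: `a ↦ (a, b, a)`, fixing the other letters. -/
def tauL (b : GW) : GW → List GW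
  | GW.a => [GW.a, b, GW.a]
  | c => [c]

/-- The substitution `τ_b` on words (monoid homomorphism). -/
def tauW (b : GW) (w : List GW) : List GW := w.flatMap (tauL b)

/-- For a sequence `l` (0-indexed: `l i` is `l_{i+1}` of the paper), `Nblk l j` is
the index of the block containing position `j`, i.e. the unique `n` with
`l 0 + ⋯ + l (n-1) ≤ j < l 0 + ⋯ + l n`;  this is `N(j) - 1` in the paper. -/
noncomputable def Nblk (l : ℕ → ℕ) (j : ℕ) : ℕ :=
  sInf {n : ℕ | j < ∑ i ∈ Finset.range (n + 1), l i}

/-- `q(j)` of the paper: `j` minus the sum of the lengths of the complete blocks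
before position `j`. -/
noncomputable def qrem (l : ℕ → ℕ) (j : ℕ) : ℕ :=
  j - ∑ i ∈ Finset.range (Nblk l j), l i

/-- The letter inserted at step `j + 1`: the blocks use `x, y, z` cyclically. -/
noncomputable def letterAt (l : ℕ → ℕ) (j : ℕ) : GW :=
  match (Nblk l j) % 3 with
  | 0 => GW.x
  | 1 => GW.y
  | _ => GW.z

/-- `gword l j = τ^{(j)}(a)`, via the recursion
`τ^{(j+1)}(a) = τ^{(j)}(a) β τ^{(j)}(a)` with `β = letterAt l j`. -/
noncomputable def gword (l : ℕ → ℕ) : ℕ → List GW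
  | 0 => [GW.a]
  | j + 1 => gword l j ++ letterAt l j :: gword l j

/-- The `l`-Grigorchuk word `η_l`: the unique infinite word having every
`τ^{(j)}(a)` as a prefix. -/
noncomputable def etaG (l : ℕ → ℕ) (n : ℕ) : GW :=
  (gword l (n + 1)).getD n GW.a

/-- The language of the `l`-Grigorchuk subshift: all factors of `η_l`. -/
noncomputable def LangG (l : ℕ → ℕ) : Set (List GW) := LangX (etaG l)

/-- The prefix of `η_l` of length `k`. -/
noncomputable def prefEta (l : ℕ → ℕ) (k : ℕ) : List GW :=
  (List.range k).map (etaG l)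

/-!
The letter of `η` at position `n` depends only on the 2-adic valuation of `n + 1`: it is `a` when
`n + 1` is odd, and the letter `β_v` inserted at step `v + 1` when `2 ^ (v + 1)` exactly divides
`n + 1` (`etaG_eq_rulerLetter`). As `β_v = x` for `v < l₁` and `β_{l₁} = y` (here `l₁ = l 0`), a
factor of `η` avoids `y` only if none of its positions has valuation exactly `l₁ + 1`. Every
`2 ^ (l₁ + 2)` consecutive positions contain an odd multiple of `2 ^ (l₁ + 1)`, so
`(a, x) ^ p ∉ L(η)` for `p ≥ 2 ^ (l₁ + 1)`. Conversely, in the window of length `2 ^ (l₁ + 2) - 2`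
centred at `2 ^ (S + 1)`, where `S = l₁ + l₂ + l₃` is the first step of the second `x`-block, every
valuation is at most `l₁` except at the centre, whose letter is `β_S = x`.
-/

theorem padicValNat_add_of_lt {p a b : ℕ} [Fact p.Prime] (ha : a ≠ 0)
    (h : padicValNat p a < padicValNat p b) :
    padicValNat p (a + b) = padicValNat p a := by
  have hb : b ≠ 0 := by rintro rfl; simp at h
  have hab : ((a : ℚ) + b) ≠ 0 := by positivity
  have := padicValRat.add_eq_of_lt (p := p) hab (by exact_mod_cast ha) (by exact_mod_cast hb)
    (by simpa [padicValRat.of_nat] using h)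
  rw [← Nat.cast_add, padicValRat.of_nat, padicValRat.of_nat] at this
  exact_mod_cast this

theorem padicValNat_lt_of_lt_pow {p d K : ℕ} [hp : Fact p.Prime] (hd : d ≠ 0)
    (hdK : d < p ^ K) :
    padicValNat p d < K :=
  (Nat.pow_lt_pow_iff_right hp.out.one_lt).1
    ((Nat.le_of_dvd (Nat.pos_of_ne_zero hd) pow_padicValNat_dvd).trans_lt hdK)

theorem flatten_replicate_pair {A : Type*} (a b : A) (p : ℕ) :
    (List.replicate p [a, b]).flatten =
      (List.range (2 * p)).map fun t => if Even t then a else b := by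
  induction p with
  | zero => rfl
  | succ p ih =>
    rw [List.replicate_succ', List.flatten_append, ih, show 2 * (p + 1) = 2 * p + 1 + 1 by ring,
      List.range_succ, List.range_succ]
    simp [parity_simps]

theorem factorOf_map_range_iff {A : Type*} (f : ℕ → A) (n : ℕ) (y : ℕ → A) :
    FactorOf ((List.range n).map f) y ↔ ∃ k, ∀ t < n, f t = y (k + t) := by
  simp [FactorOf]

theorem exists_odd_mul_mem_Ioc {N : ℕ} (hN : 0 < N) (k : ℕ) :
    ∃ s, Odd s ∧ k < N * s ∧ N * s ≤ k + 2 * N := by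
  obtain ⟨q, r, hr, hqr⟩ : ∃ q r, r < 2 * N ∧ k + N = 2 * N * q + r :=
    ⟨_, _, Nat.mod_lt _ (by omega), (Nat.div_add_mod (k + N) (2 * N)).symm⟩
  have hexpand : N * (2 * q + 1) = 2 * N * q + N := by ring
  exact ⟨2 * q + 1, odd_two_mul_add_one q, by omega, by omega⟩

section Grigorchuk

variable (l : ℕ → ℕ)

noncomputable def rulerLetter (m : ℕ) : GW :=
  match padicValNat 2 m with
  | 0 => GW.a
  | v + 1 => letterAt l v

theorem rulerLetter_of_odd {m : ℕ} (hm : Odd m) : rulerLetter l m = GW.a := by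
  rw [rulerLetter, padicValNat.eq_zero_of_not_dvd (Nat.two_dvd_ne_zero.2 (Nat.odd_iff.1 hm))]

theorem rulerLetter_two_pow_mul_odd (v : ℕ) {s : ℕ} (hs : Odd s) :
    rulerLetter l (2 ^ (v + 1) * s) = letterAt l v := by
  rw [rulerLetter, padicValNat.mul (by positivity) hs.pos.ne', padicValNat.prime_pow,
    padicValNat.eq_zero_of_not_dvd (Nat.two_dvd_ne_zero.2 (Nat.odd_iff.1 hs))]

theorem rulerLetter_two_pow_add {K d : ℕ} (hd : d ≠ 0) (hdK : d < 2 ^ K) :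
    rulerLetter l (2 ^ K + d) = rulerLetter l d := by
  have hval : padicValNat 2 d < padicValNat 2 (2 ^ K) := by
    rw [padicValNat.prime_pow]; exact padicValNat_lt_of_lt_pow hd hdK
  rw [rulerLetter, rulerLetter, add_comm, padicValNat_add_of_lt hd hval]

theorem length_gword (j : ℕ) : (gword l j).length = 2 ^ (j + 1) - 1 := by
  induction j with
  | zero => rfl
  | succ j ih =>
    have := Nat.one_le_two_pow (n := j + 1)
    rw [gword, List.length_append, List.length_cons, ih, pow_succ 2 (j + 1)]
    omega

theorem getD_gword (j i : ℕ) (hi : i < 2 ^ (j + 1) - 1) :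
    (gword l j).getD i GW.a = rulerLetter l (i + 1) := by
  induction j generalizing i with
  | zero =>
    obtain rfl : i = 0 := by simpa using hi
    exact (rulerLetter_of_odd l odd_one).symm
  | succ j ih =>
    have hlen := length_gword l j
    have hpow := Nat.one_le_two_pow (n := j + 1)
    rw [pow_succ 2 (j + 1)] at hi
    rw [gword]
    rcases lt_trichotomy i (2 ^ (j + 1) - 1) with hlt | rfl | hgt
    · rw [List.getD_append _ _ _ _ (by omega), ih i hlt]
    · rw [List.getD_append_right _ _ _ _ (by omega), hlen, Nat.sub_self, List.getD_cons_zero,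
        Nat.sub_add_cancel hpow, ← mul_one (2 ^ (j + 1)), rulerLetter_two_pow_mul_odd l j odd_one]
    · obtain ⟨d, rfl⟩ : ∃ d, i = 2 ^ (j + 1) + d := ⟨i - 2 ^ (j + 1), by omega⟩
      rw [List.getD_append_right _ _ _ _ (by omega),
        show 2 ^ (j + 1) + d - (gword l j).length = d + 1 by omega, List.getD_cons_succ,
        ih d (by omega), add_assoc, rulerLetter_two_pow_add l (by omega) (by omega)]

theorem etaG_eq_rulerLetter (n : ℕ) : etaG l n = rulerLetter l (n + 1) :=
  getD_gword l (n + 1) n (by have h : n + 2 < 2 ^ (n + 1 + 1) := Nat.lt_two_pow_self; omega)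

theorem Nblk_eq {j n : ℕ} (hlo : ∑ i ∈ Finset.range n, l i ≤ j)
    (hhi : j < ∑ i ∈ Finset.range (n + 1), l i) : Nblk l j = n := by
  refine le_antisymm (Nat.sInf_le hhi) (le_csInf ⟨n, hhi⟩ fun n' hn' => ?_)
  by_contra! h
  have hj : j < ∑ i ∈ Finset.range (n' + 1), l i := hn'
  have := Finset.sum_le_sum_of_subset (f := l)
    (Finset.range_subset_range.2 (show n' + 1 ≤ n by omega))
  omega

theorem letterAt_eq_x_of_lt {j : ℕ} (hj : j < l 0) : letterAt l j = GW.x := by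
  rw [letterAt, Nblk_eq l (n := 0) (by simp) (by simpa using hj)]
  rfl

theorem letterAt_l_zero_eq_y (h1 : 0 < l 1) : letterAt l (l 0) = GW.y := by
  rw [letterAt, Nblk_eq l (n := 1) (by simp) (by simp [Finset.sum_range_succ]; omega)]
  rfl

theorem letterAt_sum_three_eq_x (h3 : 0 < l 3) : letterAt l (l 0 + l 1 + l 2) = GW.x := by
  rw [letterAt, Nblk_eq l (n := 3) (by simp [Finset.sum_range_succ])
    (by simp [Finset.sum_range_succ]; omega)]
  rfl

theorem rulerLetter_eq_x_of_not_dvd {m : ℕ} (hm : Even m) (hdvd : ¬ 2 ^ (l 0 + 1) ∣ m) :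
    rulerLetter l m = GW.x := by
  have hm0 : m ≠ 0 := by rintro rfl; exact hdvd (dvd_zero _)
  have hlt : padicValNat 2 m < l 0 + 1 := by
    by_contra h
    exact hdvd ((padicValNat_dvd_iff_le hm0).2 (by omega))
  have hpos : 1 ≤ padicValNat 2 m :=
    (padicValNat_dvd_iff_le hm0).1 (by simpa using even_iff_two_dvd.1 hm)
  obtain ⟨v, hv⟩ : ∃ v, padicValNat 2 m = v + 1 := ⟨_, (Nat.sub_add_cancel hpos).symm⟩
  rw [rulerLetter, hv]
  exact letterAt_eq_x_of_lt l (by omega)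

theorem mem_LangG_alternating_iff (p : ℕ) :
    (List.replicate p [GW.a, GW.x]).flatten ∈ LangG l ↔
      ∃ k, ∀ t < 2 * p, (if Even t then GW.a else GW.x) = rulerLetter l (k + t + 1) := by
  change FactorOf _ _ ↔ _
  simp only [flatten_replicate_pair, factorOf_map_range_iff, etaG_eq_rulerLetter]

theorem alternating_mem_LangG (h1 : 0 < l 1) (h3 : 0 < l 3) :
    (List.replicate (2 ^ (l 0 + 1) - 1) [GW.a, GW.x]).flatten ∈ LangG l := by
  rw [mem_LangG_alternating_iff]
  set N := 2 ^ (l 0 + 1)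
  set S := l 0 + l 1 + l 2
  have hNS : N ∣ 2 ^ (S + 1) := pow_dvd_pow 2 (by omega)
  have hNle : N ≤ 2 ^ (S + 1) := Nat.le_of_dvd (by positivity) hNS
  have hN2 : 2 ≤ N := Nat.le_self_pow (by omega) 2
  set K := 2 ^ (S + 1) - N
  have hNK : N ∣ K := Nat.dvd_sub hNS dvd_rfl
  have hK : Even K := even_iff_two_dvd.2 ((dvd_pow_self 2 (by omega)).trans hNK)
  refine ⟨K, fun t ht => ?_⟩
  rcases Nat.even_or_odd t with ht' | ht'
  · rw [if_pos ht', rulerLetter_of_odd l (by rw [add_assoc]; exact hK.add_odd ht'.add_one)]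
  · rw [if_neg (Nat.not_even_iff_odd.2 ht')]
    by_cases hmid : t + 1 = N
    · rw [show K + t + 1 = 2 ^ (S + 1) * 1 by omega, rulerLetter_two_pow_mul_odd l S odd_one,
        letterAt_sum_three_eq_x l h3]
    · refine (rulerLetter_eq_x_of_not_dvd l (by rw [add_assoc]; exact hK.add ht'.add_one) ?_).symm
      rw [add_assoc, Nat.dvd_add_right hNK]
      exact fun hdvd => hmid (Nat.eq_of_dvd_of_lt_two_mul (by omega) hdvd (by omega))

theorem alternating_not_mem_LangG (h1 : 0 < l 1) {p : ℕ} (hp : 2 ^ (l 0 + 1) ≤ p) :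
    (List.replicate p [GW.a, GW.x]).flatten ∉ LangG l := by
  rw [mem_LangG_alternating_iff]
  rintro ⟨k, hk⟩
  obtain ⟨s, hs, hlo, hhi⟩ := exists_odd_mul_mem_Ioc (N := 2 ^ (l 0 + 1)) (by positivity) k
  have hletter := hk (2 ^ (l 0 + 1) * s - k - 1) (by omega)
  rw [show k + (2 ^ (l 0 + 1) * s - k - 1) + 1 = 2 ^ (l 0 + 1) * s by omega,
    rulerLetter_two_pow_mul_odd l (l 0) hs, letterAt_l_zero_eq_y l h1] at hletter
  split_ifs at hletter

end Grigorchuk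

/-- in an `l`-Grigorchuk subshift, `Q(2) = 2^(l₁+1) - 1`; more
precisely, the maximal `p` with `(a,x)^p ∈ L(η)` equals `2^(l₁+1) - 1`. -/
theorem Q_two (l : ℕ → ℕ) (hl : ∀ i, 0 < l i) :
    IsGreatest {p : ℕ | (List.replicate p [GW.a, GW.x]).flatten ∈ LangG l}
      (2 ^ (l 0 + 1) - 1) :=
  ⟨alternating_mem_LangG l (hl 1) (hl 3), fun p hp => by
    by_contra! h
    exact alternating_not_mem_LangG l (hl 1) (by omega) hp⟩
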